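/- arXiv:2411.18096 — 10 statements merged into one kernel-verified Lean document; each statement's English description precedes it below -/
import Mathlib

section
/- For every positive integer n and all real numbers u and v, one has (u² − v²) · Σ_{i=0}^{⌊(n−1)/2⌋} (u^{n−2i} − v^{n−2i})² (uv)^{2i} = (u^{2(n+1)} − v^{2(n+1)}) − (n+1) uⁿ vⁿ (u² − v²). -/
theorem stmt_0 (n : ℕ) (hn : 1 ≤ n) (u v : ℝ) :
    (u ^ 2 - v ^ 2) *
      ∑ i ∈ Finset.range ((n - 1) / 2 + 1),
        (u ^ (n - 2 * i) - v ^ (n - 2 * i)) ^ 2 * (u * v) ^ (2 * i) =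
    (u ^ (2 * (n + 1)) - v ^ (2 * (n + 1))) -
      ((n : ℝ) + 1) * u ^ n * v ^ n * (u ^ 2 - v ^ 2) := by
  clear hn
  induction n using Nat.twoStepInduction with
  | zero => norm_num
  | one =>
    simp [Finset.sum_range_succ]
    ring
  | more n ih _ =>
    match n, ih with
    | 0, _ =>
      norm_num [Finset.sum_range_succ]
      ring
    | (m + 1), ih =>
      have hrange : (m + 1 + 2 - 1) / 2 + 1 = ((m + 1 - 1) / 2 + 1) + 1 := by omega
      rw [hrange, Finset.sum_range_succ']
      have hshift : ∀ i ∈ Finset.range ((m + 1 - 1) / 2 + 1),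
          (u ^ (m + 1 + 2 - 2 * (i + 1)) - v ^ (m + 1 + 2 - 2 * (i + 1))) ^ 2 *
            (u * v) ^ (2 * (i + 1)) =
          ((u ^ (m + 1 - 2 * i) - v ^ (m + 1 - 2 * i)) ^ 2 * (u * v) ^ (2 * i)) *
            (u * v) ^ 2 := by
        intro i _
        have h1 : m + 1 + 2 - 2 * (i + 1) = m + 1 - 2 * i := by omega
        have h2 : 2 * (i + 1) = 2 * i + 2 := by omega
        rw [h1, h2, pow_add]
        ring
      rw [Finset.sum_congr rfl hshift, ← Finset.sum_mul]
      push_cast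
      simp only [Nat.add_sub_cancel] at ih
      push_cast at ih
      linear_combination (u * v) ^ 2 * ih
end

section
/- For every positive integer k and all real numbers u and v, with n = 2k, one has (u² − v²) · Σ_{i=0}^{⌊(n−1)/2⌋} (u^{n−2i} − v^{n−2i})² (uv)^{2i} = (u^{2(n+1)} − v^{2(n+1)}) − (n+1) uⁿ vⁿ (u² − v²); equivalently, setting a = u² and b = v², (a^{2k+1} − b^{2k+1}) − (2k+1) aᵏ bᵏ (a − b) = (a − b) Σ_{i=0}^{k−1} (a^{k−i} − b^{k−i})² (ab)^i for all real a, b. -/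
lemma aux_key (k : ℕ) (a b : ℝ) :
    (a ^ (2 * k + 1) - b ^ (2 * k + 1)) - (2 * (k : ℝ) + 1) * a ^ k * b ^ k * (a - b) =
    (a - b) * ∑ i ∈ Finset.range k, (a ^ (k - i) - b ^ (k - i)) ^ 2 * (a * b) ^ i := by
  induction k with
  | zero => simp
  | succ k ih =>
    rw [Finset.sum_range_succ']
    have hs : ∑ i ∈ Finset.range k,
        (a ^ (k + 1 - (i + 1)) - b ^ (k + 1 - (i + 1))) ^ 2 * (a * b) ^ (i + 1)
        = (a * b) * ∑ i ∈ Finset.range k, (a ^ (k - i) - b ^ (k - i)) ^ 2 * (a * b) ^ i := by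
      rw [Finset.mul_sum]
      refine Finset.sum_congr rfl fun i hi => ?_
      simp [Nat.succ_sub_succ, pow_succ]
      ring
    rw [hs]
    have h1 : 2 * (k + 1) + 1 = (2 * k + 1) + 2 := by ring
    have h2 : k + 1 - 0 = k + 1 := rfl
    rw [h1, h2]
    push_cast
    linear_combination (a * b) * ih

theorem stmt_1 (k : ℕ) (hk : 1 ≤ k) :
    (∀ u v : ℝ,
      (u ^ 2 - v ^ 2) *
        ∑ i ∈ Finset.range ((2 * k - 1) / 2 + 1),
          (u ^ (2 * k - 2 * i) - v ^ (2 * k - 2 * i)) ^ 2 * (u * v) ^ (2 * i) =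
      (u ^ (2 * (2 * k + 1)) - v ^ (2 * (2 * k + 1))) -
        (2 * (k : ℝ) + 1) * u ^ (2 * k) * v ^ (2 * k) * (u ^ 2 - v ^ 2)) ∧
    (∀ a b : ℝ,
      (a ^ (2 * k + 1) - b ^ (2 * k + 1)) - (2 * (k : ℝ) + 1) * a ^ k * b ^ k * (a - b) =
      (a - b) * ∑ i ∈ Finset.range k, (a ^ (k - i) - b ^ (k - i)) ^ 2 * (a * b) ^ i) := by
  constructor
  · intro u v
    have hrange : (2 * k - 1) / 2 + 1 = k := by omega
    rw [hrange]
    have hs : ∑ i ∈ Finset.range k,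
        (u ^ (2 * k - 2 * i) - v ^ (2 * k - 2 * i)) ^ 2 * (u * v) ^ (2 * i)
        = ∑ i ∈ Finset.range k,
          ((u ^ 2) ^ (k - i) - (v ^ 2) ^ (k - i)) ^ 2 * (u ^ 2 * v ^ 2) ^ i := by
      refine Finset.sum_congr rfl fun i hi => ?_
      have hi' : i ≤ k := le_of_lt (Finset.mem_range.mp hi)
      have h1 : 2 * k - 2 * i = 2 * (k - i) := by omega
      rw [h1, pow_mul, pow_mul, mul_pow, pow_mul, pow_mul, mul_pow]
    rw [hs, ← aux_key k (u ^ 2) (v ^ 2), pow_mul, pow_mul, ← pow_mul, ← pow_mul,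
      ← pow_mul u 2 k, ← pow_mul v 2 k]
  · intro a b
    exact aux_key k a b
end

section
/- For every positive integer k and all real numbers u and v, one has (u^{4k} − v^{4k}) − 2k u^{2k−1} v^{2k−1} (u² − v²) = (u² − v²) Σ_{i=0}^{k−1} (u^{2k−1−2i} − v^{2k−1−2i})² (uv)^{2i}. -/
theorem stmt_2 (k : ℕ) (hk : 1 ≤ k) (u v : ℝ) :
    (u ^ (4 * k) - v ^ (4 * k)) -
      2 * (k : ℝ) * u ^ (2 * k - 1) * v ^ (2 * k - 1) * (u ^ 2 - v ^ 2) =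
    (u ^ 2 - v ^ 2) *
      ∑ i ∈ Finset.range k,
        (u ^ (2 * k - 1 - 2 * i) - v ^ (2 * k - 1 - 2 * i)) ^ 2 * (u * v) ^ (2 * i) := by
  induction k, hk using Nat.le_induction with
  | base =>
      simp [Finset.sum_range_succ]
      ring
  | succ k hk IH =>
      obtain ⟨m, rfl⟩ : ∃ m, k = m + 1 := ⟨k - 1, by omega⟩
      have e1 : 2 * (m + 1) - 1 = 2 * m + 1 := by omega
      have e2 : 2 * (m + 1 + 1) - 1 = 2 * m + 3 := by omega
      have e3 : 4 * (m + 1 + 1) = 4 * m + 8 := by omega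
      have e4 : 4 * (m + 1) = 4 * m + 4 := by omega
      simp only [e1, e2, e3, e4] at IH ⊢
      have hsum : ∑ i ∈ Finset.range (m + 1 + 1),
          (u ^ (2 * m + 3 - 2 * i) - v ^ (2 * m + 3 - 2 * i)) ^ 2 * (u * v) ^ (2 * i)
          = (u ^ (2 * m + 3) - v ^ (2 * m + 3)) ^ 2 +
            (u * v) ^ 2 * ∑ i ∈ Finset.range (m + 1),
              (u ^ (2 * m + 1 - 2 * i) - v ^ (2 * m + 1 - 2 * i)) ^ 2 * (u * v) ^ (2 * i) := by
        rw [Finset.sum_range_succ', Finset.mul_sum, add_comm]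
        congr 1
        · norm_num
        · apply Finset.sum_congr rfl
          intro i hi
          have h1 : 2 * m + 3 - 2 * (i + 1) = 2 * m + 1 - 2 * i := by omega
          have h2 : 2 * (i + 1) = 2 * i + 2 := by ring
          rw [h1, h2, pow_add]
          ring
      rw [hsum]
      push_cast at IH ⊢
      linear_combination (u * v) ^ 2 * IH
end

section
/- For every positive integer n and all real numbers u and v, defining f_n(u,v) = Σ_{k=1}^{n} k v^{k−1} u^{n−k}, S_n(u,v) = (n+2)(u² − v²)(u^{n+1} f_n(u,v) + v^{n+1} f_n(v,u)) and P_n(u,v) = 2(u^{n+2} − v^{n+2})(u f_n(u,v) + v f_n(v,u)), one has S_n(u,v) − P_n(u,v) = n[(u^{2n+2} − v^{2n+2}) − (n+1) uⁿ vⁿ (u² − v²)]. -/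
lemma key_sum (n : ℕ) (u v : ℝ) :
    (u - v)^2 * (∑ k ∈ Finset.Icc 1 n, (k : ℝ) * v ^ (k - 1) * u ^ (n - k)) =
      u ^ (n + 1) - ((n : ℝ) + 1) * u * v ^ n + (n : ℝ) * v ^ (n + 1) := by
  induction n with
  | zero => simp
  | succ n ih =>
    rw [Finset.sum_Icc_succ_top (by omega)]
    have h1 : ∑ k ∈ Finset.Icc 1 n, (k : ℝ) * v ^ (k - 1) * u ^ (n + 1 - k) =
        u * ∑ k ∈ Finset.Icc 1 n, (k : ℝ) * v ^ (k - 1) * u ^ (n - k) := by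
      rw [Finset.mul_sum]
      apply Finset.sum_congr rfl
      intro k hk
      simp only [Finset.mem_Icc] at hk
      have : n + 1 - k = (n - k) + 1 := by omega
      rw [this, pow_succ]
      ring
    rw [h1, mul_add, mul_left_comm, ih]
    simp only [Nat.add_sub_cancel, Nat.sub_self, pow_zero]
    push_cast
    ring

theorem stmt_3 (n : ℕ) (hn : 1 ≤ n) (f : ℝ → ℝ → ℝ)
    (hf : ∀ u v : ℝ, f u v = ∑ k ∈ Finset.Icc 1 n, (k : ℝ) * v ^ (k - 1) * u ^ (n - k))
    (S P : ℝ → ℝ → ℝ)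
    (hS : ∀ u v : ℝ, S u v =
      ((n : ℝ) + 2) * (u ^ 2 - v ^ 2) * (u ^ (n + 1) * f u v + v ^ (n + 1) * f v u))
    (hP : ∀ u v : ℝ, P u v =
      2 * (u ^ (n + 2) - v ^ (n + 2)) * (u * f u v + v * f v u))
    (u v : ℝ) :
    S u v - P u v =
      (n : ℝ) * ((u ^ (2 * n + 2) - v ^ (2 * n + 2)) -
        ((n : ℝ) + 1) * u ^ n * v ^ n * (u ^ 2 - v ^ 2)) := by
  rw [hS, hP, hf u v, hf v u]
  by_cases h : u = v
  · subst h; ring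
  · have h2 : (u - v) ^ 2 ≠ 0 := pow_ne_zero _ (sub_ne_zero.mpr h)
    apply mul_left_cancel₀ h2
    have k1 := key_sum n u v
    have k2 := key_sum n v u
    have hsq : (v - u) ^ 2 = (u - v) ^ 2 := by ring
    rw [hsq] at k2
    rw [show 2 * n + 2 = (n + 1) + (n + 1) from by ring]
    linear_combination (((n:ℝ)+2)*(u^2-v^2)*u^(n+1) - 2*(u^(n+2)-v^(n+2))*u) * k1 +
      (((n:ℝ)+2)*(u^2-v^2)*v^(n+1) - 2*(u^(n+2)-v^(n+2))*v) * k2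
end

section
/- Let n be a positive integer and let u, v be real numbers with 0 < v < u and Φ(u) = Φ(v), where Φ(u) = −u²/2 + u^{n+2}/((n+1)(n+2)). Then, with f_n(u,v) = Σ_{k=1}^{n} k v^{k−1} u^{n−k} and Φ'(u) = −u + u^{n+1}/(n+1), one has f_n(u,v)·Φ'(u) + f_n(v,u)·Φ'(v) = (n/((n+1)(n+2))) · Σ_{i=0}^{⌊(n−1)/2⌋} (u^{n−2i} − v^{n−2i})² (uv)^{2i}, and this quantity is strictly positive. -/
theorem stmt_5 (n : ℕ) (hn : 1 ≤ n) (Φ Φ' : ℝ → ℝ)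
    (hΦ : ∀ u : ℝ, Φ u = -u ^ 2 / 2 + u ^ (n + 2) / (((n : ℝ) + 1) * ((n : ℝ) + 2)))
    (hΦ' : ∀ u : ℝ, Φ' u = -u + u ^ (n + 1) / ((n : ℝ) + 1))
    (f : ℝ → ℝ → ℝ)
    (hf : ∀ u v : ℝ, f u v = ∑ k ∈ Finset.Icc 1 n, (k : ℝ) * v ^ (k - 1) * u ^ (n - k))
    (u v : ℝ) (hv : 0 < v) (hvu : v < u) (heq : Φ u = Φ v) :
    f u v * Φ' u + f v u * Φ' v =
      (n : ℝ) / (((n : ℝ) + 1) * ((n : ℝ) + 2)) *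
        ∑ i ∈ Finset.range ((n - 1) / 2 + 1),
          (u ^ (n - 2 * i) - v ^ (n - 2 * i)) ^ 2 * (u * v) ^ (2 * i) ∧
    0 < f u v * Φ' u + f v u * Φ' v := by
  have hnR : (0:ℝ) < (n:ℝ) := by exact_mod_cast hn
  have hc0 : ((n:ℝ) + 1) ≠ 0 := by positivity
  have hd0 : ((n:ℝ) + 2) ≠ 0 := by positivity
  have hu0 : 0 < u := hv.trans hvu
  have hsub : 0 < u - v := sub_pos.mpr hvu
  have hXY : v ^ n < u ^ n := pow_lt_pow_left₀ hvu hv.le (by omega)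
  have hEu : ((n:ℝ)+1) * Φ' u = -((n:ℝ)+1)*u + u^(n+1) := by
    rw [hΦ']; field_simp
  have hEv : ((n:ℝ)+1) * Φ' v = -((n:ℝ)+1)*v + v^(n+1) := by
    rw [hΦ']; field_simp
  have hc2 : 2*u^(n+2) - 2*v^(n+2) = ((n:ℝ)+1)*((n:ℝ)+2)*(u^2-v^2) := by
    rw [hΦ u, hΦ v] at heq
    field_simp at heq
    linarith
  -- rewrite f as a sum over range
  have hfr : ∀ x y : ℝ, f x y = ∑ j ∈ Finset.range n, ((j:ℝ)+1) * y^j * x^(n-1-j) := by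
    intro x y
    rw [hf, show Finset.Icc 1 n = Finset.Ico 1 (n+1) from by rw [Finset.Ico_add_one_right_eq_Icc],
      Finset.sum_Ico_eq_sum_range]
    have hrn : n + 1 - 1 = n := by omega
    rw [hrn]
    refine Finset.sum_congr rfl ?_
    intro j _
    have e1 : 1 + j - 1 = j := by omega
    have e2 : n - (1 + j) = n - 1 - j := by omega
    rw [e1, e2]
    push_cast
    ring
  -- the key telescoping identity for f
  have key : ∀ x y : ℝ, (x - y) * (∑ j ∈ Finset.range n, ((j:ℝ)+1) * y^j * x^(n-1-j)) =
      y * (∑ j ∈ Finset.range n, y^j * x^(n-1-j)) + x^n - ((n:ℝ)+1)*y^n := by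
    intro x y
    have tele := Finset.sum_range_sub' (fun j => ((j:ℝ)+1) * y^j * x^(n-j)) n
    have hsum : (x - y) * (∑ j ∈ Finset.range n, ((j:ℝ)+1) * y^j * x^(n-1-j)) -
        y * (∑ j ∈ Finset.range n, y^j * x^(n-1-j)) =
        ∑ j ∈ Finset.range n,
          (((j:ℝ)+1) * y^j * x^(n-j) - (((j+1:ℕ):ℝ)+1) * y^(j+1) * x^(n-(j+1))) := by
      rw [Finset.mul_sum, Finset.mul_sum, ← Finset.sum_sub_distrib]
      refine Finset.sum_congr rfl ?_
      intro j hj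
      have hj' : j < n := Finset.mem_range.mp hj
      have e1 : n - j = n - 1 - j + 1 := by omega
      have e2 : n - (j+1) = n - 1 - j := by omega
      rw [e1, e2]
      push_cast
      ring
    rw [tele] at hsum
    simp only [Nat.cast_zero, pow_zero, Nat.sub_zero, Nat.sub_self, zero_add, one_mul,
      mul_one] at hsum
    linarith
  have h1 : (u - v) * f u v = v * (∑ j ∈ Finset.range n, v^j * u^(n-1-j)) + u^n - ((n:ℝ)+1)*v^n := by
    rw [hfr]; exact key u v
  have h2 : (v - u) * f v u = u * (∑ j ∈ Finset.range n, u^j * v^(n-1-j)) + v^n - ((n:ℝ)+1)*u^n := by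
    rw [hfr]; exact key v u
  have h3 : (u - v) * (∑ j ∈ Finset.range n, v^j * u^(n-1-j)) = u^n - v^n := by
    have := geom_sum₂_mul v u n
    linear_combination -this
  have h4 : (u - v) * (∑ j ∈ Finset.range n, u^j * v^(n-1-j)) = u^n - v^n := by
    have := geom_sum₂_mul u v n
    linear_combination this
  have key0 : 2*((n:ℝ)+1)*((u-v)^2*(f u v * Φ' u + f v u * Φ' v)) =
      (u-v)^2*((n:ℝ)*(((n:ℝ)+1)*(u^n+v^n) - 2*(u*v)^n)) := by
    linear_combination (2*(u-v)^2*(f u v))*hEu + (2*(u-v)^2*(f v u))*hEv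
      + (2*(u-v)*(-((n:ℝ)+1)*u+u*u^n))*h1 - (2*(u-v)*(-((n:ℝ)+1)*v+v*v^n))*h2
      + (2*v*(-((n:ℝ)+1)*u+u*u^n))*h3 - (2*u*(-((n:ℝ)+1)*v+v*v^n))*h4
      + (u^n-v^n)*hc2
  set m := (n-1)/2 with hm
  have perterm : ∀ i ∈ Finset.range (m+1),
      (u ^ (n - 2*i) - v ^ (n - 2*i)) ^ 2 * (u * v) ^ (2*i) * (u^2 - v^2) =
      (u^(2*n+2-2*i)*v^(2*i) - u^(2*i)*v^(2*n+2-2*i)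
        - (u^(2*n+2-2*(i+1))*v^(2*(i+1)) - u^(2*(i+1))*v^(2*n+2-2*(i+1))))
      - 2*(u*v)^n*(u^2-v^2) := by
    intro i hi
    have hi' : i < m + 1 := Finset.mem_range.mp hi
    have h2i : 2*i + 1 ≤ n := by omega
    obtain ⟨a, ha1, rfl⟩ : ∃ a, 1 ≤ a ∧ n = a + 2*i := ⟨n - 2*i, by omega, by omega⟩
    rw [show a + 2*i - 2*i = a from by omega,
      show 2*(a+2*i)+2-2*i = 2*a+2*i+2 from by omega,
      show 2*(a+2*i)+2-2*(i+1) = 2*a+2*i from by omega,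
      show 2*(i+1) = 2*i+2 from by omega]
    ring
  have key1 : (∑ i ∈ Finset.range (m+1),
      (u ^ (n - 2*i) - v ^ (n - 2*i)) ^ 2 * (u * v) ^ (2*i)) * (u^2 - v^2) =
      u^(2*n+2) - v^(2*n+2) - ((n:ℝ)+1)*(u*v)^n*(u^2-v^2) := by
    have tele := Finset.sum_range_sub'
      (fun i => u^(2*n+2-2*i)*v^(2*i) - u^(2*i)*v^(2*n+2-2*i)) (m+1)
    calc (∑ i ∈ Finset.range (m+1),
        (u ^ (n - 2*i) - v ^ (n - 2*i)) ^ 2 * (u * v) ^ (2*i)) * (u^2 - v^2)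
        = ∑ i ∈ Finset.range (m+1),
          (u ^ (n - 2*i) - v ^ (n - 2*i)) ^ 2 * (u * v) ^ (2*i) * (u^2 - v^2) := by
          rw [Finset.sum_mul]
      _ = ∑ i ∈ Finset.range (m+1),
          ((u^(2*n+2-2*i)*v^(2*i) - u^(2*i)*v^(2*n+2-2*i)
            - (u^(2*n+2-2*(i+1))*v^(2*(i+1)) - u^(2*(i+1))*v^(2*n+2-2*(i+1))))
          - 2*(u*v)^n*(u^2-v^2)) := Finset.sum_congr rfl perterm
      _ = (∑ i ∈ Finset.range (m+1),
          (u^(2*n+2-2*i)*v^(2*i) - u^(2*i)*v^(2*n+2-2*i)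
            - (u^(2*n+2-2*(i+1))*v^(2*(i+1)) - u^(2*(i+1))*v^(2*n+2-2*(i+1)))))
          - ((m+1 : ℕ) : ℝ) * (2*(u*v)^n*(u^2-v^2)) := by
          rw [Finset.sum_sub_distrib, Finset.sum_const, Finset.card_range, nsmul_eq_mul]
      _ = u^(2*n+2) - v^(2*n+2) - ((n:ℝ)+1)*(u*v)^n*(u^2-v^2) := by
          rw [tele]
          simp only [Nat.mul_zero, Nat.sub_zero, pow_zero, mul_one, one_mul]
          rcases Nat.even_or_odd n with ⟨p, hp⟩ | ⟨p, hp⟩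
          · have hp1 : 1 ≤ p := by omega
            have ecast : ((m:ℝ)+1) = (p:ℝ) := by
              have em : m + 1 = p := by omega
              exact_mod_cast congrArg (Nat.cast (R := ℝ)) em
            rw [show 2*n+2-2*(m+1) = 2*p+2 from by omega,
              show 2*(m+1) = 2*p from by omega,
              show 2*n+2 = 2*(p+p)+2 from by omega, hp]
            push_cast
            rw [show ((m:ℝ)+1) = (p:ℝ) from ecast]
            ring
          · have ecast : ((m:ℝ)+1) = (p:ℝ)+1 := by
              have em : m + 1 = p + 1 := by omega
              exact_mod_cast congrArg (Nat.cast (R := ℝ)) em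
            rw [show 2*n+2-2*(m+1) = 2*p+2 from by omega,
              show 2*(m+1) = 2*p+2 from by omega,
              show 2*n+2 = 2*(2*p+1)+2 from by omega, hp]
            push_cast
            rw [show ((m:ℝ)+1) = (p:ℝ)+1 from ecast]
            ring
  have hK : (2*((n:ℝ)+1)*(u-v)^2*(u^2-v^2)) ≠ 0 := by
    have h8 : 0 < u^2 - v^2 := by nlinarith
    have : 0 < 2*((n:ℝ)+1)*(u-v)^2*(u^2-v^2) := by
      apply mul_pos _ h8
      apply mul_pos (by positivity) (pow_pos hsub 2)
    exact ne_of_gt this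
  have h6 : ((f u v * Φ' u + f v u * Φ' v) * (((n:ℝ)+1)*((n:ℝ)+2))) *
      (2*((n:ℝ)+1)*(u-v)^2*(u^2-v^2)) =
      ((n:ℝ) * (∑ i ∈ Finset.range (m+1),
        (u ^ (n - 2*i) - v ^ (n - 2*i)) ^ 2 * (u * v) ^ (2*i))) *
      (2*((n:ℝ)+1)*(u-v)^2*(u^2-v^2)) := by
    linear_combination (((n:ℝ)+1)*((n:ℝ)+2)*(u^2-v^2))*key0
      + (-(2*((n:ℝ)+1)*(n:ℝ)*(u-v)^2))*key1
      + (-(((n:ℝ)+1)*(u^n+v^n)*(n:ℝ)*(u-v)^2))*hc2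
  have h9 := mul_right_cancel₀ hK h6
  have hmain : f u v * Φ' u + f v u * Φ' v = (n:ℝ)/(((n:ℝ)+1)*((n:ℝ)+2)) *
      (∑ i ∈ Finset.range (m+1),
        (u ^ (n - 2*i) - v ^ (n - 2*i)) ^ 2 * (u * v) ^ (2*i)) := by
    rw [div_mul_eq_mul_div, eq_div_iff (by positivity)]
    exact h9
  refine ⟨hmain, ?_⟩
  rw [hmain]
  apply mul_pos (div_pos hnR (by positivity))
  apply Finset.sum_pos'
  · intro i _
    have huvp : (0:ℝ) ≤ (u*v)^(2*i) := le_of_lt (pow_pos (mul_pos hu0 hv) _)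
    exact mul_nonneg (sq_nonneg _) huvp
  · refine ⟨0, Finset.mem_range.mpr (Nat.succ_pos m), ?_⟩
    simp only [Nat.mul_zero, Nat.sub_zero, pow_zero, mul_one]
    exact pow_pos (sub_pos.mpr hXY) 2
end

section
/- Let n be a positive integer, Φ(u) = −u²/2 + u^{n+2}/((n+1)(n+2)), a = (n+1)^{1/n}, and B = ((n+1)(n+2)/2)^{1/n}. Suppose δ : (a, B) → (0, a) is a differentiable function satisfying Φ(δ(u)) = Φ(u) for all u ∈ (a, B). Then the function T_n(u) = Σ_{k=0}^{n} u^{n−k} δ(u)^{k} is strictly decreasing on (a, B). -/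
/-!
Put `p = u` and `q = δ u`, so that `0 < q < a < p` and `T = (p ^ (n + 1) - q ^ (n + 1)) / (p - q)`.
Differentiating `Φ (δ u) = Φ u` gives `(q ^ (n + 1) - (n + 1) q) δ' = p ^ (n + 1) - (n + 1) p`,
where the factor on the left is negative because `q ^ n < a ^ n = n + 1`. Multiplying the
numerator `N` of `T'` by this factor and by `2 (p ^ (n + 2) - q ^ (n + 2)) > 0`, and eliminating
`δ'` and then `Φ q = Φ p`, leaves
`n (n + 1) (p - q) ^ 2 (p ^ (2n + 2) - q ^ (2n + 2) - (n + 1) (p q) ^ n (p ^ 2 - q ^ 2))`,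
which is positive by AM-GM on the terms of the geometric sum for `p ^ (2n + 2) - q ^ (2n + 2)`.
Hence `N < 0`.
-/

open Finset Filter Topology

theorem add_one_mul_pow_lt_sum_sq_pow {R : Type*} [CommRing R] [LinearOrder R]
    [IsStrictOrderedRing R] {x y : R} {n : ℕ} (h : x ^ n ≠ y ^ n) :
    (n + 1) * (x * y) ^ n < ∑ j ∈ range (n + 1), (x ^ 2) ^ j * (y ^ 2) ^ (n - j) := by
  have hreflect : ∑ j ∈ range (n + 1), (x ^ 2) ^ (n - j) * (y ^ 2) ^ j =
      ∑ j ∈ range (n + 1), (x ^ 2) ^ j * (y ^ 2) ^ (n - j) := by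
    rw [← sum_range_reflect]
    refine sum_congr rfl fun j hj => ?_
    rw [Nat.add_sub_cancel, Nat.sub_sub_self (Nat.lt_succ_iff.mp (mem_range.mp hj))]
  have hpair : ∀ j ∈ range (n + 1),
      2 * (x * y) ^ n ≤ (x ^ 2) ^ j * (y ^ 2) ^ (n - j) + (x ^ 2) ^ (n - j) * (y ^ 2) ^ j := by
    intro j hj
    obtain ⟨m, rfl⟩ := Nat.exists_eq_add_of_le (Nat.lt_succ_iff.mp (mem_range.mp hj))
    rw [Nat.add_sub_cancel_left]
    linear_combination two_mul_le_add_sq (x ^ j * y ^ m) (x ^ m * y ^ j)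
  have hpair₀ :
      2 * (x * y) ^ n < (x ^ 2) ^ 0 * (y ^ 2) ^ (n - 0) + (x ^ 2) ^ (n - 0) * (y ^ 2) ^ 0 := by
    linear_combination sq_pos_of_ne_zero (sub_ne_zero.mpr h)
  have := sum_lt_sum hpair ⟨0, by simp, hpair₀⟩
  rw [sum_add_distrib, hreflect, sum_const, card_range, nsmul_eq_mul] at this
  push_cast at this
  linarith

theorem add_one_mul_pow_mul_sq_sub_sq_lt {p q : ℝ} {n : ℕ} (hn : n ≠ 0) (hq : 0 ≤ q)
    (hqp : q < p) :
    (n + 1) * (p * q) ^ n * (p ^ 2 - q ^ 2) < (p ^ 2) ^ (n + 1) - (q ^ 2) ^ (n + 1) := by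
  have hgeom := geom_sum₂_mul (p ^ 2) (q ^ 2) (n + 1)
  rw [Nat.add_sub_cancel] at hgeom
  have hsq : 0 < p ^ 2 - q ^ 2 := by nlinarith
  have := mul_lt_mul_of_pos_right
    (add_one_mul_pow_lt_sum_sq_pow (pow_lt_pow_left₀ hqp hq hn).ne') hsq
  rwa [hgeom] at this

theorem HasDerivAt.mul_eq_of_comp_eventuallyEq {𝕜 : Type*} [NontriviallyNormedField 𝕜]
    {f g : 𝕜 → 𝕜} {f₁ f₂ g' x : 𝕜} (hf₁ : HasDerivAt f f₁ (g x)) (hf₂ : HasDerivAt f f₂ x)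
    (hg : HasDerivAt g g' x) (h : f ∘ g =ᶠ[𝓝 x] f) : f₁ * g' = f₂ :=
  ((hf₁.comp x hg).congr_of_eventuallyEq h.symm).unique hf₂

theorem hasDerivAt_sum_pow_mul_pow {δ : ℝ → ℝ} {d x : ℝ} (n : ℕ) (hδ : HasDerivAt δ d x)
    (hx : δ x ≠ x) :
    HasDerivAt (fun u => ∑ k ∈ range (n + 1), u ^ (n - k) * δ u ^ k)
      (((n + 1) * (x ^ n - δ x ^ n * d) * (x - δ x) - (x ^ (n + 1) - δ x ^ (n + 1)) * (1 - d))
        / (x - δ x) ^ 2) x := by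
  have hquot : (fun u => ∑ k ∈ range (n + 1), u ^ (n - k) * δ u ^ k)
      =ᶠ[𝓝 x] fun u => (u ^ (n + 1) - δ u ^ (n + 1)) / (u - δ u) := by
    filter_upwards [(hδ.continuousAt.sub continuousAt_id).eventually_ne (sub_ne_zero.mpr hx)]
      with u (hu : δ u - u ≠ 0)
    rw [← neg_div_neg_eq, neg_sub, neg_sub, ← geom₂_sum (sub_ne_zero.mp hu), Nat.add_sub_cancel]
    exact sum_congr rfl fun k _ => mul_comm _ _
  have hnum : HasDerivAt (fun u => u ^ (n + 1) - δ u ^ (n + 1))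
      ((n + 1) * x ^ n - (n + 1) * δ x ^ n * d) x :=
    ((hasDerivAt_pow (n + 1) x).sub (hδ.pow (n + 1))).congr_deriv (by push_cast; ring)
  have hden : HasDerivAt (fun u => u - δ u) (1 - d) x := (hasDerivAt_id x).sub hδ
  exact ((hnum.fun_div hden (sub_ne_zero.mpr hx.symm)).congr_deriv (by ring))
    |>.congr_of_eventuallyEq hquot

noncomputable def phi (n : ℕ) (u : ℝ) : ℝ :=
  -u ^ 2 / 2 + u ^ (n + 2) / (((n : ℝ) + 1) * ((n : ℝ) + 2))

theorem hasDerivAt_phi (n : ℕ) (u : ℝ) : HasDerivAt (phi n) (u ^ (n + 1) / (n + 1) - u) u := by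
  have h := ((hasDerivAt_pow 2 u).div_const 2).neg.add
    ((hasDerivAt_pow (n + 2) u).div_const (((n : ℝ) + 1) * ((n : ℝ) + 2)))
  refine (h.congr_deriv ?_).congr_of_eventuallyEq (Eventually.of_forall fun v => ?_)
  · push_cast
    field_simp
    ring
  · simp only [phi, Pi.add_apply, Pi.neg_apply]; ring

theorem phi_eq_phi_iff {n : ℕ} {p q : ℝ} :
    phi n q = phi n p ↔ 2 * (p ^ (n + 2) - q ^ (n + 2)) = (n + 1) * (n + 2) * (p ^ 2 - q ^ 2) := by
  unfold phi
  constructor <;> intro h <;> field_simp at * <;> linarith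

theorem sum_pow_mul_pow_deriv_numerator_neg {n : ℕ} (hn : n ≠ 0) {p q d : ℝ} (hq : 0 < q)
    (hqp : q < p) (hqn : q ^ n < n + 1)
    (hΦ : 2 * (p ^ (n + 2) - q ^ (n + 2)) = (n + 1) * (n + 2) * (p ^ 2 - q ^ 2))
    (hδ' : (q ^ (n + 1) - (n + 1) * q) * d = p ^ (n + 1) - (n + 1) * p) :
    (n + 1) * (p ^ n - q ^ n * d) * (p - q) - (p ^ (n + 1) - q ^ (n + 1)) * (1 - d) < 0 := by
  set P := p ^ n
  set Q := q ^ n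
  have key : (q ^ (n + 1) - (n + 1) * q)
        * ((n + 1) * (P - Q * d) * (p - q) - (p ^ (n + 1) - q ^ (n + 1)) * (1 - d))
        * (2 * (p ^ (n + 2) - q ^ (n + 2)))
      = n * (n + 1) * (p - q) ^ 2
        * ((p ^ 2) ^ (n + 1) - (q ^ 2) ^ (n + 1) - (n + 1) * (p * q) ^ n * (p ^ 2 - q ^ 2)) := by
    linear_combination
      2 * (P * p ^ 2 - Q * q ^ 2) * (p ^ (n + 1) - (n + 1) * Q * p + n * Q * q) * hδ'
      + (q ^ 2 * Q ^ 2 - (n + 1) * q ^ 2 * P * Q + 2 * n * p * q * P * Q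
      - (n + 1) * p ^ 2 * P * Q + p ^ 2 * P ^ 2) * hΦ
  have hfactor : q ^ (n + 1) - (n + 1) * q < 0 := by
    rw [pow_succ]; nlinarith
  have hsum_pos : 0 < 2 * (p ^ (n + 2) - q ^ (n + 2)) := by
    have := pow_lt_pow_left₀ hqp hq.le (n := n + 2) (by omega)
    linarith
  have hrhs_pos : 0 < n * (n + 1) * (p - q) ^ 2
      * ((p ^ 2) ^ (n + 1) - (q ^ 2) ^ (n + 1) - (n + 1) * (p * q) ^ n * (p ^ 2 - q ^ 2)) := by
    have hBr := add_one_mul_pow_mul_sq_sub_sq_lt hn hq.le hqp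
    have hn_pos : (0 : ℝ) < n := by positivity
    have hpq : 0 < p - q := sub_pos.mpr hqp
    positivity
  rw [← key] at hrhs_pos
  exact neg_of_mul_pos_right (pos_of_mul_pos_left hrhs_pos hsum_pos.le) hfactor.le

theorem stmt_11_general (n : ℕ) (hn : 1 ≤ n) (Φ : ℝ → ℝ)
    (hΦ : ∀ u : ℝ, Φ u = -u ^ 2 / 2 + u ^ (n + 2) / (((n : ℝ) + 1) * ((n : ℝ) + 2)))
    (a B : ℝ) (ha : a = ((n : ℝ) + 1) ^ ((1 : ℝ) / n))
    (δ : ℝ → ℝ)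
    (hδmem : ∀ u ∈ Set.Ioo a B, δ u ∈ Set.Ioo (0 : ℝ) a)
    (hδdiff : DifferentiableOn ℝ δ (Set.Ioo a B))
    (hδΦ : ∀ u ∈ Set.Ioo a B, Φ (δ u) = Φ u) :
    StrictAntiOn (fun u => ∑ k ∈ Finset.range (n + 1), u ^ (n - k) * δ u ^ k)
      (Set.Ioo a B) := by
  obtain rfl : Φ = phi n := funext hΦ
  have hn₀ : n ≠ 0 := by omega
  have ha_pow : a ^ n = n + 1 := by
    rw [ha, one_div, Real.rpow_inv_natCast_pow (by positivity) hn₀]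
  have hbounds : ∀ u ∈ Set.Ioo a B, 0 < δ u ∧ δ u < u ∧ δ u ^ n < n + 1 := fun u hu =>
    ⟨(hδmem u hu).1, (hδmem u hu).2.trans hu.1,
      ha_pow ▸ pow_lt_pow_left₀ (hδmem u hu).2 (hδmem u hu).1.le hn₀⟩
  have hδ' : ∀ u ∈ Set.Ioo a B, HasDerivAt δ (deriv δ u) u := fun u hu =>
    (hδdiff.differentiableAt (isOpen_Ioo.mem_nhds hu)).hasDerivAt
  have hT := fun u (hu : u ∈ Set.Ioo a B) =>
    hasDerivAt_sum_pow_mul_pow n (hδ' u hu) (hbounds u hu).2.1.ne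
  refine strictAntiOn_of_deriv_neg (convex_Ioo a B)
    (fun u hu => (hT u hu).continuousAt.continuousWithinAt) fun u hu => ?_
  rw [interior_Ioo] at hu
  obtain ⟨hq, hqu, hqn⟩ := hbounds u hu
  rw [(hT u hu).deriv]
  refine div_neg_of_neg_of_pos (sum_pow_mul_pow_deriv_numerator_neg hn₀ hq hqu hqn
    (phi_eq_phi_iff.mp (hδΦ u hu)) ?_) (pow_pos (sub_pos.mpr hqu) 2)
  have := (hasDerivAt_phi n (δ u)).mul_eq_of_comp_eventuallyEq (hasDerivAt_phi n u) (hδ' u hu)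
    (eventually_of_mem (isOpen_Ioo.mem_nhds hu) (hδΦ ·))
  field_simp at this
  linear_combination this

theorem stmt_11 (n : ℕ) (hn : 1 ≤ n) (Φ : ℝ → ℝ)
    (hΦ : ∀ u : ℝ, Φ u = -u ^ 2 / 2 + u ^ (n + 2) / (((n : ℝ) + 1) * ((n : ℝ) + 2)))
    (a B : ℝ) (ha : a = ((n : ℝ) + 1) ^ ((1 : ℝ) / n))
    (hB : B = (((n : ℝ) + 1) * ((n : ℝ) + 2) / 2) ^ ((1 : ℝ) / n))
    (δ : ℝ → ℝ)
    (hδmem : ∀ u ∈ Set.Ioo a B, δ u ∈ Set.Ioo (0 : ℝ) a)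
    (hδdiff : DifferentiableOn ℝ δ (Set.Ioo a B))
    (hδΦ : ∀ u ∈ Set.Ioo a B, Φ (δ u) = Φ u) :
    StrictAntiOn (fun u => ∑ k ∈ Finset.range (n + 1), u ^ (n - k) * δ u ^ k)
      (Set.Ioo a B) :=
  stmt_11_general n hn Φ hΦ a B ha δ hδmem hδdiff hδΦ
end

section
/- Let n be a positive integer. For every h ∈ (p₁, 0), the ratio of Abelian integrals satisfies the strict bounds 2(n+1)(n+2)/(3n+4) < A_n(h)/A_0(h) < n+1. -/
/-! With `y = √(2(h − Φ u))` and `I_m = ∫_α^β u^m y du`: since `y` vanishes at both turning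
points, integrating `d/du (y³/u)` over `[α, β]` gives `∫ y³/u² = 3 I₀ − 3 I_n/(n+1)`, and positivity
of the left side is the upper bound. Substituting `−h = (u² − 2u^{n+2}/((n+1)(n+2)) − y²)/2` into
`−h ∫ y/u²` and using the first identity gives `−h ∫ y/u² = (3n+4)/(2(n+1)(n+2)) I_n − I₀`, whose
positivity for `h < 0` is the lower bound. -/

open Real Filter Topology Set MeasureTheory intervalIntegral

theorem hasDerivAt_mul_sqrt_self (x : ℝ) : HasDerivAt (fun y => y * √y) (3 / 2 * √x) x := by
  rcases lt_trichotomy x 0 with hx | rfl | hx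
  · have hzero : (fun y => y * √y) =ᶠ[𝓝 x] fun _ => 0 := by
      filter_upwards [gt_mem_nhds hx] with y hy
      rw [sqrt_eq_zero_of_nonpos hy.le, mul_zero]
    rw [sqrt_eq_zero_of_nonpos hx.le, mul_zero]
    exact (hasDerivAt_const x 0).congr_of_eventuallyEq hzero
  · rw [sqrt_zero, mul_zero, hasDerivAt_iff_tendsto_slope_zero]
    have hsqrt : Tendsto (fun t : ℝ => √t) (𝓝[≠] 0) (𝓝 0) := by
      simpa using continuous_sqrt.continuousAt.tendsto.mono_left (nhdsWithin_le_nhds (a := 0))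
    refine hsqrt.congr' ?_
    filter_upwards [self_mem_nhdsWithin] with t (ht : t ≠ 0)
    simp [inv_mul_cancel_left₀ ht]
  · refine ((hasDerivAt_id' x).mul (hasDerivAt_sqrt hx.ne')).congr_deriv ?_
    have hs : √x ≠ 0 := (sqrt_pos.2 hx).ne'
    field_simp
    rw [sq_sqrt hx.le]
    ring

theorem HasDerivAt.mul_sqrt {g : ℝ → ℝ} {g' x : ℝ} (hg : HasDerivAt g g' x) :
    HasDerivAt (fun y => g y * √(g y)) (3 / 2 * √(g x) * g') x :=
  (hasDerivAt_mul_sqrt_self (g x)).comp x hg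

theorem intervalIntegrable_div_sq {f : ℝ → ℝ} {a b : ℝ} (ha : 0 < a) (hab : a ≤ b)
    (hf : ContinuousOn f (Icc a b)) : IntervalIntegrable (fun u => f u / u ^ 2) volume a b :=
  ContinuousOn.intervalIntegrable <| uIcc_of_le hab ▸
    hf.div (continuousOn_pow 2) fun _ hu => pow_ne_zero 2 (ha.trans_le hu.1).ne'

theorem integral_div_sq_pos {f : ℝ → ℝ} {a b : ℝ} (ha : 0 < a) (hab : a < b)
    (hf : ContinuousOn f (Icc a b)) (hpos : ∀ u ∈ Ioo a b, 0 < f u) :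
    0 < ∫ u in a..b, f u / u ^ 2 :=
  intervalIntegral_pos_of_pos_on (intervalIntegrable_div_sq ha hab.le hf)
    (fun u hu => div_pos (hpos u hu) (pow_pos (ha.trans hu.1) 2)) hab

theorem integral_mul_sqrt_div_sq_eq {g g' : ℝ → ℝ} {a b : ℝ} (ha : 0 < a) (hab : a ≤ b)
    (hg : ∀ u ∈ Icc a b, HasDerivAt g (g' u) u) (hg' : ContinuousOn g' (Icc a b))
    (hga : g a = 0) (hgb : g b = 0) :
    ∫ u in a..b, g u * √(g u) / u ^ 2 = ∫ u in a..b, 3 / 2 * √(g u) * g' u / u := by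
  have hne : ∀ u ∈ Icc a b, u ≠ 0 := fun u hu => (ha.trans_le hu.1).ne'
  have hgc : ContinuousOn g (Icc a b) := fun u hu => (hg u hu).continuousAt.continuousWithinAt
  have hi₁ : IntervalIntegrable (fun u => g u * √(g u) / u ^ 2) volume a b :=
    intervalIntegrable_div_sq ha hab (hgc.mul hgc.sqrt)
  have hi₂ : IntervalIntegrable (fun u => 3 / 2 * √(g u) * g' u / u) volume a b :=
    ContinuousOn.intervalIntegrable <| uIcc_of_le hab ▸
      ((continuousOn_const.mul hgc.sqrt).mul hg').div continuousOn_id hne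
  have hderiv : ∀ u ∈ uIcc a b, HasDerivAt (fun y => g y * √(g y) / y)
      (3 / 2 * √(g u) * g' u / u - g u * √(g u) / u ^ 2) u := by
    intro u hu
    rw [uIcc_of_le hab] at hu
    refine ((hg u hu).mul_sqrt.div (hasDerivAt_id' u) (hne u hu)).congr_deriv ?_
    field_simp [hne u hu]
  have hftc := integral_eq_sub_of_hasDerivAt hderiv (hi₂.sub hi₁)
  rw [integral_sub hi₂ hi₁, hga, hgb] at hftc
  simp only [sqrt_zero, mul_zero, zero_div, sub_zero] at hftc
  exact (sub_eq_zero.1 hftc).symm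

noncomputable def potential (n : ℕ) (u : ℝ) : ℝ :=
  -u ^ 2 / 2 + u ^ (n + 2) / (((n : ℝ) + 1) * ((n : ℝ) + 2))

/-- `y²` on the energy level `y²/2 + Φ(u) = h`. -/
noncomputable def velocitySq (n : ℕ) (h u : ℝ) : ℝ := 2 * (h - potential n u)

@[fun_prop]
theorem continuous_velocitySq (n : ℕ) (h : ℝ) : Continuous (velocitySq n h) := by
  unfold velocitySq potential
  fun_prop

theorem hasDerivAt_velocitySq (n : ℕ) (h u : ℝ) :
    HasDerivAt (velocitySq n h) (2 * u * ((n + 1) - u ^ n) / (n + 1)) u := by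
  have hpow (k : ℕ) : HasDerivAt (fun u : ℝ => u ^ k) (k * u ^ (k - 1)) u := hasDerivAt_pow k u
  refine ((((hpow 2).neg.div_const 2).add ((hpow (n + 2)).div_const _)).const_sub h
    |>.const_mul 2).congr_deriv ?_
  push_cast
  field_simp
  ring

theorem velocitySq_strictMonoOn {n : ℕ} {a : ℝ} (h : ℝ) (hn : n ≠ 0) (ha : a ^ n = n + 1) :
    StrictMonoOn (velocitySq n h) (Icc 0 a) := by
  refine strictMonoOn_of_deriv_pos (convex_Icc 0 a) (continuous_velocitySq n h).continuousOn ?_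
  rw [interior_Icc]
  rintro u ⟨hu₀, hua⟩
  have : u ^ n < n + 1 := ha ▸ pow_lt_pow_left₀ hua hu₀.le hn
  rw [(hasDerivAt_velocitySq n h u).deriv]
  positivity

theorem velocitySq_strictAntiOn {n : ℕ} {a : ℝ} (h : ℝ) (hn : n ≠ 0) (ha₀ : 0 ≤ a)
    (ha : a ^ n = n + 1) : StrictAntiOn (velocitySq n h) (Ici a) := by
  refine strictAntiOn_of_deriv_neg (convex_Ici a) (continuous_velocitySq n h).continuousOn ?_
  rw [interior_Ici]
  intro u (hau : a < u)
  have hu : 0 < u := ha₀.trans_lt hau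
  have : n + 1 < u ^ n := ha ▸ pow_lt_pow_left₀ hau ha₀ hn
  rw [(hasDerivAt_velocitySq n h u).deriv]
  exact div_neg_of_neg_of_pos (mul_neg_of_pos_of_neg (by positivity) (by linarith)) (by positivity)

theorem velocitySq_pos {n : ℕ} {h a α β u : ℝ} (hn : n ≠ 0) (ha : a ^ n = n + 1) (hα : 0 < α)
    (hαa : α < a) (hgα : velocitySq n h α = 0) (hgβ : velocitySq n h β = 0)
    (hu : u ∈ Ioo α β) : 0 < velocitySq n h u := by
  rcases le_or_gt u a with hua | hau
  · rw [← hgα]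
    exact velocitySq_strictMonoOn h hn ha ⟨hα.le, hαa.le⟩ ⟨hα.le.trans hu.1.le, hua⟩ hu.1
  · rw [← hgβ]
    exact velocitySq_strictAntiOn h hn (hα.trans hαa).le ha hau.le (hau.trans hu.2).le hu.2

theorem integral_velocitySq_mul_sqrt_div_sq {n : ℕ} {h α β : ℝ} (hα : 0 < α) (hαβ : α ≤ β)
    (hgα : velocitySq n h α = 0) (hgβ : velocitySq n h β = 0) :
    ∫ u in α..β, velocitySq n h u * √(velocitySq n h u) / u ^ 2 =
      3 * (∫ u in α..β, √(velocitySq n h u))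
        - 3 / (n + 1) * ∫ u in α..β, u ^ n * √(velocitySq n h u) := by
  have hcongr :
      EqOn (fun u => 3 / 2 * √(velocitySq n h u) * (2 * u * (n + 1 - u ^ n) / (n + 1)) / u)
      (fun u => 3 * √(velocitySq n h u) - 3 / (n + 1) * (u ^ n * √(velocitySq n h u)))
      (uIcc α β) := by
    intro u hu
    have hu : u ≠ 0 := (hα.trans_le (uIcc_of_le hαβ ▸ hu).1).ne'
    field_simp
  rw [integral_mul_sqrt_div_sq_eq hα hαβ (fun u _ => hasDerivAt_velocitySq n h u)
    (by fun_prop) hgα hgβ, integral_congr hcongr,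
    integral_sub ((by fun_prop : Continuous _).intervalIntegrable _ _)
      ((by fun_prop : Continuous _).intervalIntegrable _ _),
    intervalIntegral.integral_const_mul, intervalIntegral.integral_const_mul]

theorem neg_mul_integral_sqrt_velocitySq_div_sq {n : ℕ} {h α β : ℝ} (hα : 0 < α) (hαβ : α ≤ β)
    (hgα : velocitySq n h α = 0) (hgβ : velocitySq n h β = 0) :
    -h * ∫ u in α..β, √(velocitySq n h u) / u ^ 2 =
      (3 * n + 4) / (2 * (n + 1) * (n + 2)) * (∫ u in α..β, u ^ n * √(velocitySq n h u))
        - ∫ u in α..β, √(velocitySq n h u) := by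
  have hcongr : EqOn (fun u => -h * (√(velocitySq n h u) / u ^ 2))
      (fun u => 1 / 2 * √(velocitySq n h u) - 1 / ((n + 1) * (n + 2)) * (u ^ n * √(velocitySq n h u))
        - 1 / 2 * (velocitySq n h u * √(velocitySq n h u) / u ^ 2)) (uIcc α β) := by
    intro u hu
    have hu : u ≠ 0 := (hα.trans_le (uIcc_of_le hαβ ▸ hu).1).ne'
    dsimp only
    generalize √(velocitySq n h u) = s
    simp only [velocitySq, potential]
    field_simp
    ring
  rw [← intervalIntegral.integral_const_mul, integral_congr hcongr,
    integral_sub (((by fun_prop : Continuous _).intervalIntegrable _ _).sub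
      ((by fun_prop : Continuous _).intervalIntegrable _ _))
      ((intervalIntegrable_div_sq hα hαβ (by fun_prop)).const_mul _),
    integral_sub ((by fun_prop : Continuous _).intervalIntegrable _ _)
      ((by fun_prop : Continuous _).intervalIntegrable _ _),
    intervalIntegral.integral_const_mul, intervalIntegral.integral_const_mul,
    intervalIntegral.integral_const_mul, integral_velocitySq_mul_sqrt_div_sq hα hαβ hgα hgβ]
  field_simp
  ring

theorem integral_sqrt_velocitySq_pos {n : ℕ} {h a α β : ℝ} (hn : n ≠ 0) (ha : a ^ n = n + 1)
    (hα : 0 < α) (hαa : α < a) (hαβ : α < β) (hgα : velocitySq n h α = 0)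
    (hgβ : velocitySq n h β = 0) : 0 < ∫ u in α..β, √(velocitySq n h u) :=
  intervalIntegral_pos_of_pos_on ((continuous_velocitySq n h).sqrt.intervalIntegrable _ _)
    (fun _ hu => sqrt_pos.2 (velocitySq_pos hn ha hα hαa hgα hgβ hu)) hαβ

theorem integral_pow_mul_sqrt_velocitySq_lt {n : ℕ} {h a α β : ℝ} (hn : n ≠ 0)
    (ha : a ^ n = n + 1) (hα : 0 < α) (hαa : α < a) (hαβ : α < β) (hgα : velocitySq n h α = 0)
    (hgβ : velocitySq n h β = 0) :
    ∫ u in α..β, u ^ n * √(velocitySq n h u) < (n + 1) * ∫ u in α..β, √(velocitySq n h u) := by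
  have hpos : 0 < ∫ u in α..β, velocitySq n h u * √(velocitySq n h u) / u ^ 2 :=
    integral_div_sq_pos hα hαβ (by fun_prop) fun u hu =>
      have := velocitySq_pos hn ha hα hαa hgα hgβ hu
      by positivity
  rw [integral_velocitySq_mul_sqrt_div_sq hα hαβ.le hgα hgβ] at hpos
  field_simp at hpos
  linarith

theorem lt_integral_pow_mul_sqrt_velocitySq {n : ℕ} {h a α β : ℝ} (hn : n ≠ 0) (hh : h < 0)
    (ha : a ^ n = n + 1) (hα : 0 < α) (hαa : α < a) (hαβ : α < β) (hgα : velocitySq n h α = 0)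
    (hgβ : velocitySq n h β = 0) :
    2 * (n + 1) * (n + 2) / (3 * n + 4) * ∫ u in α..β, √(velocitySq n h u) <
      ∫ u in α..β, u ^ n * √(velocitySq n h u) := by
  have hpos : 0 < ∫ u in α..β, √(velocitySq n h u) / u ^ 2 :=
    integral_div_sq_pos hα hαβ (by fun_prop) fun u hu =>
      sqrt_pos.2 (velocitySq_pos hn ha hα hαa hgα hgβ hu)
  have := mul_pos (neg_pos.2 hh) hpos
  rw [neg_mul_integral_sqrt_velocitySq_div_sq hα hαβ.le hgα hgβ] at this
  field_simp at this ⊢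
  linarith

theorem stmt_14_general (n : ℕ) (hn : 1 ≤ n) (Φ : ℝ → ℝ)
    (hΦ : ∀ u : ℝ, Φ u = -u ^ 2 / 2 + u ^ (n + 2) / (((n : ℝ) + 1) * ((n : ℝ) + 2)))
    (a B p₁ : ℝ) (ha : a = ((n : ℝ) + 1) ^ ((1 : ℝ) / n))
    (α β : ℝ → ℝ)
    (hα : ∀ h ∈ Set.Ioo p₁ (0 : ℝ), α h ∈ Set.Ioo (0 : ℝ) a ∧ Φ (α h) = h)
    (hβ : ∀ h ∈ Set.Ioo p₁ (0 : ℝ), β h ∈ Set.Ioo a B ∧ Φ (β h) = h)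
    (A : ℕ → ℝ → ℝ)
    (hA : ∀ (m : ℕ) (h : ℝ),
      A m h = 2 * ∫ u in (α h)..(β h), u ^ m * Real.sqrt (2 * (h - Φ u))) :
    ∀ h ∈ Set.Ioo p₁ (0 : ℝ),
      2 * ((n : ℝ) + 1) * ((n : ℝ) + 2) / (3 * (n : ℝ) + 4) < A n h / A 0 h ∧
      A n h / A 0 h < (n : ℝ) + 1 := by
  intro h hh
  obtain rfl : Φ = potential n := funext hΦ
  obtain ⟨⟨hα₀, hαa⟩, hΦα⟩ := hα h hh
  obtain ⟨⟨haβ, -⟩, hΦβ⟩ := hβ h hh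
  have hn₀ : n ≠ 0 := by omega
  have han : a ^ n = n + 1 := by rw [ha, one_div, rpow_inv_natCast_pow (by positivity) hn₀]
  have hgα : velocitySq n h (α h) = 0 := by rw [velocitySq, hΦα, sub_self, mul_zero]
  have hgβ : velocitySq n h (β h) = 0 := by rw [velocitySq, hΦβ, sub_self, mul_zero]
  have hαβ := hαa.trans haβ
  have hI₀ := integral_sqrt_velocitySq_pos hn₀ han hα₀ hαa hαβ hgα hgβ
  have hA' (m : ℕ) : A m h = 2 * ∫ u in α h..β h, u ^ m * √(velocitySq n h u) := hA m h
  simp only [hA', pow_zero, one_mul]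
  rw [mul_div_mul_left _ _ two_ne_zero, lt_div_iff₀ hI₀, div_lt_iff₀ hI₀]
  exact ⟨lt_integral_pow_mul_sqrt_velocitySq hn₀ hh.2 han hα₀ hαa hαβ hgα hgβ,
    integral_pow_mul_sqrt_velocitySq_lt hn₀ han hα₀ hαa hαβ hgα hgβ⟩

theorem stmt_14 (n : ℕ) (hn : 1 ≤ n) (Φ : ℝ → ℝ)
    (hΦ : ∀ u : ℝ, Φ u = -u ^ 2 / 2 + u ^ (n + 2) / (((n : ℝ) + 1) * ((n : ℝ) + 2)))
    (a B p₁ : ℝ) (ha : a = ((n : ℝ) + 1) ^ ((1 : ℝ) / n))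
    (hB : B = (((n : ℝ) + 1) * ((n : ℝ) + 2) / 2) ^ ((1 : ℝ) / n))
    (hp₁ : p₁ = -(n : ℝ) * ((n : ℝ) + 1) ^ ((2 : ℝ) / n) / (2 * ((n : ℝ) + 2)))
    (α β : ℝ → ℝ)
    (hα : ∀ h ∈ Set.Ioo p₁ (0 : ℝ), α h ∈ Set.Ioo (0 : ℝ) a ∧ Φ (α h) = h)
    (hβ : ∀ h ∈ Set.Ioo p₁ (0 : ℝ), β h ∈ Set.Ioo a B ∧ Φ (β h) = h)
    (A : ℕ → ℝ → ℝ)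
    (hA : ∀ (m : ℕ) (h : ℝ),
      A m h = 2 * ∫ u in (α h)..(β h), u ^ m * Real.sqrt (2 * (h - Φ u))) :
    ∀ h ∈ Set.Ioo p₁ (0 : ℝ),
      2 * ((n : ℝ) + 1) * ((n : ℝ) + 2) / (3 * (n : ℝ) + 4) < A n h / A 0 h ∧
      A n h / A 0 h < (n : ℝ) + 1 :=
  stmt_14_general n hn Φ hΦ a B p₁ ha α β hα hβ A hA
end

section
/- Let n be a positive integer and B = ((n+1)(n+2)/2)^{1/n}. Then J_0(0) := ∫_0^B √(u² − 2u^{n+2}/((n+1)(n+2))) du = (1/n)·((n+1)(n+2)/2)^{2/n}·Β(3/2, 2/n), where Β denotes the Beta function. -/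
/-!
Put `C = (n+1)(n+2)/2`, so that the integrand is `u √(1 - uⁿ/C)` and `B = C^{1/n}`.
The substitution `x = 1 - uⁿ/C` maps `(0, B)` bijectively onto `(0, 1)`, with
`|dx| = n uⁿ⁻¹/C du` and `(1 - x)^{2/n - 1} = u^{2-n} C^{1-2/n}`, which turns the integral into
`(C^{2/n}/n) ∫₀¹ x^{1/2} (1 - x)^{2/n - 1} dx = (C^{2/n}/n) Β(3/2, 2/n)`.
Since the exponent `2/n - 1` may be negative, the substitution is done with the measure-theoretic
change of variables formula rather than the one for continuous integrands.
-/

open MeasureTheory Real Set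

section OneSubPowDiv

variable {n : ℕ} {C : ℝ}

lemma pow_lt_iff_lt_rpow_inv {u : ℝ} (hu : 0 ≤ u) (hC : 0 ≤ C) (hn : n ≠ 0) :
    u ^ n < C ↔ u < C ^ (n⁻¹ : ℝ) := by
  rw [← pow_lt_pow_iff_left₀ hu (rpow_nonneg hC _) hn, rpow_inv_natCast_pow hC hn]

lemma strictAntiOn_one_sub_pow_div (hn : n ≠ 0) (hC : 0 < C) :
    StrictAntiOn (fun u : ℝ => 1 - u ^ n / C) (Ioi 0) := fun a ha b _ hab => by
  have : a ^ n / C < b ^ n / C :=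
    div_lt_div_of_pos_right (pow_lt_pow_left₀ hab (le_of_lt ha) hn) hC
  simpa using this

lemma image_one_sub_pow_div_Ioo (hn : n ≠ 0) (hC : 0 < C) :
    (fun u : ℝ => 1 - u ^ n / C) '' Ioo 0 (C ^ (n⁻¹ : ℝ)) = Ioo 0 1 := by
  ext x
  constructor
  · rintro ⟨u, ⟨hu0, huB⟩, rfl⟩
    have hlt : u ^ n < C := (pow_lt_iff_lt_rpow_inv hu0.le hC.le hn).2 huB
    have hpos : 0 < u ^ n / C := by positivity
    have hlt_one : u ^ n / C < 1 := (div_lt_one hC).2 hlt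
    constructor <;> simp only <;> linarith
  · rintro ⟨hx0, hx1⟩
    have hCx : 0 < C * (1 - x) := mul_pos hC (by linarith)
    refine ⟨(C * (1 - x)) ^ (n⁻¹ : ℝ), ⟨by positivity, ?_⟩, ?_⟩
    · exact rpow_lt_rpow hCx.le (by nlinarith) (by positivity)
    · simp only [rpow_inv_natCast_pow hCx.le hn]
      field_simp
      ring

theorem setIntegral_Ioo_comp_one_sub_pow_div (hn : n ≠ 0) (hC : 0 < C) (g : ℝ → ℝ) :
    ∫ u in Ioo 0 (C ^ (n⁻¹ : ℝ)), n * u ^ (n - 1) / C * g (1 - u ^ n / C) =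
      ∫ x in Ioo 0 1, g x := by
  have hderiv : ∀ u ∈ Ioo 0 (C ^ (n⁻¹ : ℝ)),
      HasDerivWithinAt (fun u : ℝ => 1 - u ^ n / C) (-(n * u ^ (n - 1) / C))
        (Ioo 0 (C ^ (n⁻¹ : ℝ))) u := fun u _ =>
    (((hasDerivAt_pow n u).div_const C).const_sub 1).hasDerivWithinAt
  have hinj : InjOn (fun u : ℝ => 1 - u ^ n / C) (Ioo 0 (C ^ (n⁻¹ : ℝ))) :=
    ((strictAntiOn_one_sub_pow_div hn hC).mono Ioo_subset_Ioi_self).injOn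
  rw [← image_one_sub_pow_div_Ioo hn hC,
    integral_image_eq_integral_abs_deriv_smul measurableSet_Ioo hderiv hinj]
  refine setIntegral_congr_fun measurableSet_Ioo fun u hu => ?_
  rw [abs_neg, abs_of_nonneg (by have := hu.1; positivity), smul_eq_mul]

end OneSubPowDiv

lemma pow_rpow_two_div_natCast {u : ℝ} (hu : 0 ≤ u) {n : ℕ} (hn : n ≠ 0) :
    (u ^ n) ^ ((2 : ℝ) / n) = u ^ 2 := by
  rw [← rpow_natCast, ← rpow_mul hu, mul_div_cancel₀ _ (Nat.cast_ne_zero.2 hn)]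
  norm_cast

lemma sqrt_sq_sub_eq_mul_beta_integrand {n : ℕ} (hn : n ≠ 0) {C u : ℝ} (hC : 0 < C)
    (hu : 0 < u) :
    √(u ^ 2 - u ^ (n + 2) / C) =
      C ^ ((2 : ℝ) / n) / n * (n * u ^ (n - 1) / C *
        ((1 - u ^ n / C) ^ ((3 / 2 : ℝ) - 1) * (1 - (1 - u ^ n / C)) ^ ((2 : ℝ) / n - 1))) := by
  have hun : 0 < u ^ n := pow_pos hu n
  have hsub : u ^ 2 - u ^ (n + 2) / C = u ^ 2 * (1 - u ^ n / C) := by field_simp; ring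
  have hsqrt : (1 - u ^ n / C) ^ ((3 / 2 : ℝ) - 1) = √(1 - u ^ n / C) := by
    rw [sqrt_eq_rpow]; norm_num
  have hpow : (u ^ n / C) ^ ((2 : ℝ) / n - 1) = u ^ 2 / C ^ ((2 : ℝ) / n) / (u ^ n / C) := by
    rw [rpow_sub_one (by positivity), div_rpow hun.le hC.le, pow_rpow_two_div_natCast hu.le hn]
  rw [hsub, sqrt_mul (sq_nonneg u), sqrt_sq hu.le, hsqrt, sub_sub_cancel, hpow]
  obtain ⟨m, rfl⟩ := Nat.exists_eq_add_of_le' (Nat.pos_of_ne_zero hn)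
  simp only [Nat.add_sub_cancel, pow_succ]
  field_simp

theorem stmt_15 (n : ℕ) (hn : 1 ≤ n)
    (Beta : ℝ → ℝ → ℝ)
    (hBeta : ∀ p q : ℝ, 0 < p → 0 < q →
      Beta p q = ∫ x in (0 : ℝ)..1, x ^ (p - 1) * (1 - x) ^ (q - 1)) :
    ∫ u in (0 : ℝ)..((((n : ℝ) + 1) * ((n : ℝ) + 2) / 2) ^ ((1 : ℝ) / n)),
        Real.sqrt (u ^ 2 - 2 * u ^ (n + 2) / (((n : ℝ) + 1) * ((n : ℝ) + 2))) =
      (1 / (n : ℝ)) * ((((n : ℝ) + 1) * ((n : ℝ) + 2) / 2) ^ ((2 : ℝ) / n)) *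
        Beta (3 / 2) (2 / (n : ℝ)) := by
  have hn0 : n ≠ 0 := Nat.one_le_iff_ne_zero.1 hn
  set C : ℝ := ((n : ℝ) + 1) * ((n : ℝ) + 2) / 2
  have hC : 0 < C := by positivity
  have hintegrand (u : ℝ) :
      2 * u ^ (n + 2) / (((n : ℝ) + 1) * ((n : ℝ) + 2)) = u ^ (n + 2) / C := by
    simp only [C]; field_simp
  simp_rw [hintegrand]
  rw [one_div (n : ℝ), intervalIntegral.integral_of_le (rpow_nonneg hC.le _),
    integral_Ioc_eq_integral_Ioo,
    setIntegral_congr_fun measurableSet_Ioo fun u hu =>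
      sqrt_sq_sub_eq_mul_beta_integrand hn0 hC hu.1,
    integral_const_mul,
    setIntegral_Ioo_comp_one_sub_pow_div hn0 hC
      fun x => x ^ ((3 / 2 : ℝ) - 1) * (1 - x) ^ ((2 : ℝ) / n - 1),
    hBeta _ _ (by norm_num) (by positivity), intervalIntegral.integral_of_le zero_le_one,
    integral_Ioc_eq_integral_Ioo]
  ring
end

section
/- Let n be a positive integer and B = ((n+1)(n+2)/2)^{1/n}. Then J_n(0) := ∫_0^B uⁿ·√(u² − 2u^{n+2}/((n+1)(n+2))) du = (1/n)·((n+1)(n+2)/2)^{(n+2)/n}·Β(3/2, (n+2)/n), where Β denotes the Beta function. -/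
/-!
Put `C = (n+1)(n+2)/2` and substitute `x = uⁿ / C`, so that `u² = C^(2/n) x^(2/n)` and
`u^(n-1) du = (C/n) dx`. The integrand `uⁿ √(u² - u^(n+2)/C) = u^(n-1) · u² √(1 - x)` becomes
`(C^((n+2)/n) / n) x^(2/n) (1 - x)^(1/2)` on `[0, 1]`, which is the Beta integral for
`(3/2, (n+2)/n)` after `x ↦ 1 - x`.
-/

open Real intervalIntegral

lemma integral_rpow_mul_one_sub_rpow_comm (a b : ℝ) :
    ∫ x in (0 : ℝ)..1, x ^ a * (1 - x) ^ b = ∫ x in (0 : ℝ)..1, x ^ b * (1 - x) ^ a := by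
  have h := integral_comp_sub_left (fun x : ℝ => x ^ a * (1 - x) ^ b) (a := 0) (b := 1) 1
  simp only [sub_sub_cancel, sub_zero, sub_self] at h
  rw [← h]
  simp only [mul_comm]

lemma integral_pow_pred_mul_comp_pow_div {n : ℕ} (hn : n ≠ 0) {C : ℝ} (hC : 0 < C)
    {g : ℝ → ℝ} (hg : Continuous g) :
    ∫ u in (0 : ℝ)..C ^ ((1 : ℝ) / n), u ^ (n - 1) * g (u ^ n / C) =
      C / n * ∫ x in (0 : ℝ)..1, g x := by
  have hsubst := integral_comp_mul_deriv (a := 0) (b := C ^ ((1 : ℝ) / n))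
    (f := fun u => u ^ n / C) (f' := fun u => n * u ^ (n - 1) / C)
    (fun u _ => by simpa using (hasDerivAt_pow n u).div_const C) (by fun_prop) hg
  have hend : (C ^ ((1 : ℝ) / n)) ^ n / C = 1 := by
    rw [one_div, rpow_inv_natCast_pow hC.le hn, div_self hC.ne']
  simp only [Function.comp_def, ne_eq, hn, not_false_eq_true, zero_pow, zero_div, hend] at hsubst
  rw [← hsubst, ← integral_const_mul]
  refine integral_congr fun u _ => ?_
  field_simp

lemma pow_mul_sqrt_sq_sub_pow_div {n : ℕ} (hn : n ≠ 0) {C : ℝ} (hC : 0 < C) {u : ℝ}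
    (hu : 0 ≤ u) :
    u ^ n * √(u ^ 2 - u ^ (n + 2) / C) =
      C ^ ((2 : ℝ) / n) * (u ^ (n - 1) * ((u ^ n / C) ^ ((2 : ℝ) / n) * √(1 - u ^ n / C))) := by
  have hsqrt : √(u ^ 2 - u ^ (n + 2) / C) = u * √(1 - u ^ n / C) := by
    rw [show u ^ 2 - u ^ (n + 2) / C = u ^ 2 * (1 - u ^ n / C) by ring,
      sqrt_mul (by positivity), sqrt_sq hu]
  have hpow : (u ^ n / C) ^ ((2 : ℝ) / n) = u ^ 2 / C ^ ((2 : ℝ) / n) := by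
    rw [div_rpow (by positivity) hC.le, ← rpow_natCast, ← rpow_mul hu,
      mul_div_cancel₀ _ (Nat.cast_ne_zero.mpr hn), rpow_two]
  obtain ⟨m, rfl⟩ := Nat.exists_eq_succ_of_ne_zero hn
  rw [hsqrt, hpow, Nat.succ_sub_one]
  field_simp
  rw [pow_succ]
  ring

theorem stmt_16 (n : ℕ) (hn : 1 ≤ n)
    (Beta : ℝ → ℝ → ℝ)
    (hBeta : ∀ p q : ℝ, 0 < p → 0 < q →
      Beta p q = ∫ x in (0 : ℝ)..1, x ^ (p - 1) * (1 - x) ^ (q - 1)) :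
    ∫ u in (0 : ℝ)..((((n : ℝ) + 1) * ((n : ℝ) + 2) / 2) ^ ((1 : ℝ) / n)),
        u ^ n * Real.sqrt (u ^ 2 - 2 * u ^ (n + 2) / (((n : ℝ) + 1) * ((n : ℝ) + 2))) =
      (1 / (n : ℝ)) * ((((n : ℝ) + 1) * ((n : ℝ) + 2) / 2) ^ (((n : ℝ) + 2) / n)) *
        Beta (3 / 2) (((n : ℝ) + 2) / (n : ℝ)) := by
  have hn0 : n ≠ 0 := by omega
  set C : ℝ := ((n : ℝ) + 1) * ((n : ℝ) + 2) / 2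
  have hC : 0 < C := by positivity
  have hintegrand : ∀ u ∈ Set.uIcc 0 (C ^ ((1 : ℝ) / n)),
      u ^ n * √(u ^ 2 - 2 * u ^ (n + 2) / (((n : ℝ) + 1) * ((n : ℝ) + 2))) =
        C ^ ((2 : ℝ) / n) * (u ^ (n - 1) * ((u ^ n / C) ^ ((2 : ℝ) / n) * √(1 - u ^ n / C))) := by
    intro u hu
    rw [Set.uIcc_of_le (by positivity)] at hu
    rw [← pow_mul_sqrt_sq_sub_pow_div hn0 hC hu.1]
    congr 3
    field_simp
    ring
  have hg : Continuous fun x : ℝ => x ^ ((2 : ℝ) / n) * √(1 - x) := by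
    have := continuous_rpow_const (q := (2 : ℝ) / n) (by positivity)
    fun_prop
  rw [integral_congr hintegrand, integral_const_mul, integral_pow_pred_mul_comp_pow_div hn0 hC hg,
    hBeta _ _ (by norm_num) (by positivity), integral_rpow_mul_one_sub_rpow_comm]
  simp_rw [sqrt_eq_rpow]
  rw [show ((n : ℝ) + 2) / n - 1 = 2 / n by field_simp; ring,
    show (3 : ℝ) / 2 - 1 = 1 / 2 by norm_num, show ((n : ℝ) + 2) / n = 1 + 2 / n by field_simp,
    rpow_add hC, rpow_one]
  ring
end

section
/- Let n be a positive integer and B = ((n+1)(n+2)/2)^{1/n}. Then the ratio of the integrals J_n(0) = ∫_0^B uⁿ·√(u² − 2u^{n+2}/((n+1)(n+2))) du and J_0(0) = ∫_0^B √(u² − 2u^{n+2}/((n+1)(n+2))) du equals J_n(0)/J_0(0) = 2(n+1)(n+2)/(3n+4). -/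
/-!
Write `c = (n+1)(n+2)/2`, so that `Bⁿ = c` and the radicand is `u² (1 - uⁿ/c)`. The function
`F(u) = u² (1 - uⁿ/c)^{3/2}` has derivative `2 √(u² (1 - uⁿ/c)) - (3n+4)/(2c) · uⁿ √(u² (1 - uⁿ/c))`
on `(0, B)` and vanishes at both endpoints, so `2 J₀ = (3n+4)/(2c) · Jₙ`.
-/

open Real Set intervalIntegral

theorem HasDerivAt.mul_sqrt_self {f : ℝ → ℝ} {f' x : ℝ} (hf : HasDerivAt f f' x)
    (hx : 0 < f x) :
    HasDerivAt (fun y => f y * √(f y)) (3 / 2 * f' * √(f x)) x := by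
  refine (hf.mul (hf.sqrt hx.ne')).congr_deriv ?_
  have hs : √(f x) ≠ 0 := (sqrt_pos.mpr hx).ne'
  have hsq : √(f x) ^ 2 = f x := sq_sqrt hx.le
  generalize √(f x) = s at hs hsq ⊢
  rw [← hsq]
  field_simp
  ring

variable {n : ℕ} {B c u : ℝ}

lemma one_sub_pow_div_pos (hn : n ≠ 0) (hc : B ^ n = c) (hu : u ∈ Ioo 0 B) :
    0 < 1 - u ^ n / c := by
  subst hc
  rw [sub_pos, div_lt_one (pow_pos (hu.1.trans hu.2) n)]
  exact pow_lt_pow_left₀ hu.2 hu.1.le hn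

lemma hasDerivAt_sq_mul_one_sub_pow_div_mul_sqrt (hn : n ≠ 0) (hc : B ^ n = c)
    (hu : u ∈ Ioo 0 B) :
    HasDerivAt (fun u => u ^ 2 * ((1 - u ^ n / c) * √(1 - u ^ n / c)))
      (2 * √(u ^ 2 * (1 - u ^ n / c))
        - (3 * n + 4) / (2 * c) * (u ^ n * √(u ^ 2 * (1 - u ^ n / c)))) u := by
  have hc0 : c ≠ 0 := hc ▸ pow_ne_zero n (hu.1.trans hu.2).ne'
  have ht : HasDerivAt (fun u => 1 - u ^ n / c) (-(n * u ^ (n - 1) / c)) u :=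
    ((hasDerivAt_pow n u).div_const c).const_sub 1
  refine ((hasDerivAt_pow 2 u).mul
    (ht.mul_sqrt_self (one_sub_pow_div_pos hn hc hu))).congr_deriv ?_
  rw [sqrt_mul (sq_nonneg u), sqrt_sq hu.1.le]
  generalize √(1 - u ^ n / c) = s
  obtain ⟨m, rfl⟩ := Nat.exists_eq_add_one_of_ne_zero hn
  rw [Nat.add_sub_cancel]
  field_simp
  push_cast
  ring

theorem mul_integral_pow_mul_sqrt_sq_mul_one_sub (hn : n ≠ 0) (hB : 0 < B) (hc : B ^ n = c) :
    (3 * n + 4) * ∫ u in 0..B, u ^ n * √(u ^ 2 * (1 - u ^ n / c)) =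
      4 * c * ∫ u in 0..B, √(u ^ 2 * (1 - u ^ n / c)) := by
  have hc0 : c ≠ 0 := hc ▸ pow_ne_zero n hB.ne'
  have hFTC := integral_eq_sub_of_hasDerivAt_of_le hB.le (by fun_prop)
    (fun u hu => hasDerivAt_sq_mul_one_sub_pow_div_mul_sqrt hn hc hu)
    (by apply Continuous.intervalIntegrable; fun_prop)
  rw [integral_sub (by apply Continuous.intervalIntegrable; fun_prop)
      (by apply Continuous.intervalIntegrable; fun_prop), integral_const_mul, integral_const_mul,
    hc, div_self hc0] at hFTC
  simp only [sub_self, zero_mul, mul_zero, zero_pow two_ne_zero] at hFTC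
  rw [sub_eq_zero, div_mul_eq_mul_div, eq_div_iff (by positivity)] at hFTC
  linear_combination -hFTC

theorem integral_sqrt_sq_mul_one_sub_pos (hn : n ≠ 0) (hB : 0 < B) (hc : B ^ n = c) :
    0 < ∫ u in 0..B, √(u ^ 2 * (1 - u ^ n / c)) :=
  intervalIntegral_pos_of_pos_on (by apply Continuous.intervalIntegrable; fun_prop)
    (fun u hu => sqrt_pos.mpr (mul_pos (pow_pos hu.1 2) (one_sub_pow_div_pos hn hc hu))) hB

theorem stmt_17 (n : ℕ) (hn : 1 ≤ n) :
    (∫ u in (0 : ℝ)..((((n : ℝ) + 1) * ((n : ℝ) + 2) / 2) ^ ((1 : ℝ) / n)),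
        u ^ n * Real.sqrt (u ^ 2 - 2 * u ^ (n + 2) / (((n : ℝ) + 1) * ((n : ℝ) + 2)))) /
      (∫ u in (0 : ℝ)..((((n : ℝ) + 1) * ((n : ℝ) + 2) / 2) ^ ((1 : ℝ) / n)),
        Real.sqrt (u ^ 2 - 2 * u ^ (n + 2) / (((n : ℝ) + 1) * ((n : ℝ) + 2)))) =
      2 * ((n : ℝ) + 1) * ((n : ℝ) + 2) / (3 * (n : ℝ) + 4) := by
  have hn0 : n ≠ 0 := by omega
  have hB : 0 < (((n : ℝ) + 1) * ((n : ℝ) + 2) / 2) ^ ((1 : ℝ) / n) := by positivity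
  have hBn : ((((n : ℝ) + 1) * ((n : ℝ) + 2) / 2) ^ ((1 : ℝ) / n)) ^ n =
      ((n : ℝ) + 1) * ((n : ℝ) + 2) / 2 := by
    rw [one_div]; exact rpow_inv_natCast_pow (by positivity) hn0
  have hradicand (u : ℝ) : u ^ 2 - 2 * u ^ (n + 2) / (((n : ℝ) + 1) * ((n : ℝ) + 2)) =
      u ^ 2 * (1 - u ^ n / (((n : ℝ) + 1) * ((n : ℝ) + 2) / 2)) := by
    field_simp; ring
  simp_rw [hradicand]
  have key := mul_integral_pow_mul_sqrt_sq_mul_one_sub hn0 hB hBn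
  rw [div_eq_iff (integral_sqrt_sq_mul_one_sub_pos hn0 hB hBn).ne', div_mul_eq_mul_div,
    eq_div_iff (by positivity)]
  linear_combination key
end
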